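/- arXiv:2002.06947 — 7 statements merged into one kernel-verified Lean document; each statement's English description precedes it below -/
import Mathlib

section
/- Let $\mathcal{F}$ be a finite family of at least $d+1$ compact convex sets in $\mathbb{R}^d$ whose common intersection $I$ is nonempty, and let $x$ be the lexicographic minimum point of $I$. Then there exists a subfamily $\mathcal{H} \subseteq \mathcal{F}$ of exactly $d$ sets such that $x$ is the lexicographic minimum point of $\bigcap \mathcal{H}$. -/
/-!
The strict lexicographic lower set `{y | y <lex x}` is convex. If no `d`-element subfamily had `x`
as its lexicographic minimum, each of them would meet this set, and Helly's theorem applied to `F`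
together with it would give a point of `⋂ F` lexicographically below `x`.
-/

open Module Finset

instance Pi.Lex.posSMulStrictMono {α ι : Type*} {β : ι → Type*} [LinearOrder ι] [Zero α]
    [Preorder α] [∀ i, PartialOrder (β i)] [∀ i, SMul α (β i)] [∀ i, PosSMulStrictMono α (β i)] :
    PosSMulStrictMono α (Lex (∀ i, β i)) where
  smul_lt_smul_of_pos_left a ha _ _ := fun ⟨i, heq, hlt⟩ ↦
    ⟨i, fun j hj ↦ congrArg (a • ·) (heq j hj), smul_lt_smul_of_pos_left hlt ha⟩

theorem convex_setOf_toLex_lt {𝕜 ι : Type*} {β : ι → Type*} [LinearOrder ι] [Semiring 𝕜]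
    [PartialOrder 𝕜] [∀ i, AddCommMonoid (β i)] [∀ i, PartialOrder (β i)]
    [∀ i, IsOrderedCancelAddMonoid (β i)] [∀ i, Module 𝕜 (β i)] [∀ i, PosSMulStrictMono 𝕜 (β i)]
    (x : ∀ i, β i) : Convex 𝕜 {y | toLex y < toLex x} :=
  (convex_Iio (toLex x)).linear_preimage (toLexLinearEquiv 𝕜 (∀ i, β i)).toLinearMap

/-- Helly's theorem applied to `insert C F`: a subfamily of size at most `finrank + 1` is either
inside `F`, or consists of `C` and at most `finrank` members of `F`. -/
theorem Convex.inter_biInter_nonempty_of_forall_card_eq_finrank {𝕜 E : Type*} [Field 𝕜]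
    [LinearOrder 𝕜] [IsStrictOrderedRing 𝕜] [AddCommGroup E] [Module 𝕜 E] [FiniteDimensional 𝕜 E]
    {F : Finset (Set E)} {C : Set E} (hF : finrank 𝕜 E ≤ #F) (hF_conv : ∀ S ∈ F, Convex 𝕜 S)
    (hC : Convex 𝕜 C) (hF_ne : (⋂ S ∈ F, S).Nonempty)
    (h : ∀ H ⊆ F, #H = finrank 𝕜 E → (C ∩ ⋂ S ∈ H, S).Nonempty) :
    (C ∩ ⋂ S ∈ F, S).Nonempty := by
  classical
  suffices (⋂ S ∈ insert C F, S).Nonempty by rwa [Finset.set_biInter_insert] at this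
  refine Convex.helly_theorem' (𝕜 := 𝕜) (F := id) (fun S hS ↦ ?_) fun I hI hI_card ↦ ?_
  · rcases Finset.mem_insert.mp hS with rfl | hS
    exacts [hC, hF_conv S hS]
  by_cases hCI : C ∈ I
  · have hI_erase : I.erase C ⊆ F := Finset.subset_insert_iff.mp hI
    obtain ⟨H, hIH, hHF, hH_card⟩ := Finset.exists_subsuperset_card_eq hI_erase
      (by rw [Finset.card_erase_of_mem hCI]; omega) hF
    rw [← Finset.insert_erase hCI, Finset.set_biInter_insert]
    exact (h H hHF hH_card).mono <|
      Set.inter_subset_inter_right _ (Set.biInter_mono hIH fun _ _ ↦ subset_rfl)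
  · exact hF_ne.mono <|
      Set.biInter_mono ((Finset.subset_insert_iff_of_notMem hCI).mp hI) fun _ _ ↦ subset_rfl

theorem stmt_0_general {d : ℕ} (F : Finset (Set (Fin d → ℝ)))
    (hcard : d + 1 ≤ F.card)
    (hconv : ∀ S ∈ F, Convex ℝ S)
    (x : Fin d → ℝ) (hx : x ∈ ⋂ S ∈ F, S)
    (hmin : ∀ y ∈ ⋂ S ∈ F, S, toLex x ≤ toLex y) :
    ∃ H ⊆ F, H.card = d ∧ x ∈ ⋂ S ∈ H, S ∧
      ∀ y ∈ ⋂ S ∈ H, S, toLex x ≤ toLex y := by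
  by_contra! hcon
  have hx_sub (H) (hH : H ⊆ F) : x ∈ ⋂ S ∈ H, S :=
    Set.biInter_mono hH (fun _ _ ↦ subset_rfl) hx
  obtain ⟨y, hy_lt, hy⟩ : ({y | toLex y < toLex x} ∩ ⋂ S ∈ F, S).Nonempty := by
    refine Convex.inter_biInter_nonempty_of_forall_card_eq_finrank (𝕜 := ℝ)
      (by rw [finrank_fin_fun]; omega) hconv (convex_setOf_toLex_lt x) ⟨x, hx⟩ ?_
    intro H hH hH_card
    obtain ⟨y, hy, hy_lt⟩ := hcon H hH (by rwa [finrank_fin_fun] at hH_card) (hx_sub H hH)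
    exact ⟨y, hy_lt, hy⟩
  exact (hmin y hy).not_gt hy_lt

theorem stmt_0 {d : ℕ} (hd : 1 ≤ d) (F : Finset (Set (Fin d → ℝ)))
    (hcard : d + 1 ≤ F.card)
    (hconv : ∀ S ∈ F, Convex ℝ S) (hcomp : ∀ S ∈ F, IsCompact S)
    (x : Fin d → ℝ) (hx : x ∈ ⋂ S ∈ F, S)
    (hmin : ∀ y ∈ ⋂ S ∈ F, S, toLex x ≤ toLex y) :
    ∃ H ⊆ F, H.card = d ∧ x ∈ ⋂ S ∈ H, S ∧
      ∀ y ∈ ⋂ S ∈ H, S, toLex x ≤ toLex y :=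
  stmt_0_general F hcard hconv x hx hmin
end

section
/- Let $\mathfrak{S} = (\mathcal{B}, \mathcal{C}, \mathcal{D}, h, \preceq)$ be an Ordered-Helly system. Let $\mathcal{F} \subseteq \mathcal{D}$ be a family of $n \geq h$ compact sets whose common intersection $I$ is nonempty, and let $x$ be the $\preceq$-minimum of $I$. Then there exists a subfamily $\mathcal{G} \subseteq \mathcal{F}$ of size $h-1$ such that $x$ is the $\preceq$-minimum of $\bigcap \mathcal{G}$. -/
/-!
Adjoin the convex down-set `{y | y < x}` to `F`: the enlarged family has empty intersection,
since `x` is the least common point of `F`. By Helly, some `h` of its members already have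
empty intersection. One of them must be the down-set, as the others all contain `x`; the
remaining `h - 1` members of `F` contain `x` and have no common point below `x`.
-/

structure OrderedHellySystem (B : Type*) [LinearOrder B] where
  C : Set (Set B)
  D : Set (Set B)
  h : ℕ
  two_le_h : 2 ≤ h
  D_subset_C : D ⊆ C
  inter_mem : ∀ S₁ ∈ D, ∀ S₂ ∈ D, S₁ ∩ S₂ ∈ D
  attainable_min : ∀ S ∈ D, S.Nonempty → ∃ x ∈ S, ∀ y ∈ S, x ≤ y
  convex_order : ∀ t : B, {x : B | x < t} ∈ C
  helly : ∀ F : Finset (Set B), ↑F ⊆ C → h ≤ F.card →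
    (∀ G ⊆ F, G.card = h → (⋂ S ∈ G, S).Nonempty) → (⋂ S ∈ F, S).Nonempty

theorem Finset.biInter_insert_Iio_eq_empty {B : Type*} [LinearOrder B] {F : Finset (Set B)}
    {x : B} (hx : x ∈ lowerBounds (⋂ S ∈ F, S)) : ⋂ S ∈ insert (Set.Iio x) F, S = ∅ := by
  rw [Finset.set_biInter_insert, Set.eq_empty_iff_forall_notMem]
  rintro y ⟨hyx, hy⟩
  exact (hx hy).not_gt hyx

namespace OrderedHellySystem

variable {B : Type*} [LinearOrder B] (𝔖 : OrderedHellySystem B)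

theorem exists_card_eq_h_biInter_eq_empty {F : Finset (Set B)} (hFC : ↑F ⊆ 𝔖.C)
    (hcard : 𝔖.h ≤ F.card) (hF : ⋂ S ∈ F, S = ∅) :
    ∃ G ⊆ F, G.card = 𝔖.h ∧ ⋂ S ∈ G, S = ∅ := by
  by_contra! hG
  exact (𝔖.helly F hFC hcard hG).ne_empty hF

theorem exists_card_eq_h_sub_one_isLeast {F : Finset (Set B)} (hFC : ↑F ⊆ 𝔖.C)
    (hcard : 𝔖.h ≤ F.card) {x : B} (hx : IsLeast (⋂ S ∈ F, S) x) :
    ∃ G ⊆ F, G.card = 𝔖.h - 1 ∧ IsLeast (⋂ S ∈ G, S) x := by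
  classical
  have hFC' : ↑(insert (Set.Iio x) F) ⊆ 𝔖.C := by
    rw [Finset.coe_insert]
    exact Set.insert_subset (𝔖.convex_order x) hFC
  obtain ⟨G', hG'F, hG'card, hG'⟩ := 𝔖.exists_card_eq_h_biInter_eq_empty hFC'
    (hcard.trans (Finset.card_le_card (Finset.subset_insert _ _)))
    (Finset.biInter_insert_Iio_eq_empty hx.2)
  have hGF : G'.erase (Set.Iio x) ⊆ F := Finset.subset_insert_iff.mp hG'F
  have hx_mem : x ∈ ⋂ S ∈ G'.erase (Set.Iio x), S :=
    Set.biInter_subset_biInter_left (fun S hS => hGF hS) hx.1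
  have hIio : Set.Iio x ∈ G' := by
    by_contra hIio
    rw [← Finset.erase_eq_of_notMem hIio] at hG'
    exact (Set.nonempty_of_mem hx_mem).ne_empty hG'
  refine ⟨_, hGF, by rw [Finset.card_erase_of_mem hIio, hG'card], hx_mem, fun y hy => ?_⟩
  by_contra! hyx
  rw [← Finset.insert_erase hIio, Finset.set_biInter_insert] at hG'
  exact Set.eq_empty_iff_forall_notMem.mp hG' y ⟨hyx, hy⟩

end OrderedHellySystem

theorem stmt_7 {B : Type*} [LinearOrder B] (𝔖 : OrderedHellySystem B)
    (F : Finset (Set B)) (hFD : ↑F ⊆ 𝔖.D) (hcard : 𝔖.h ≤ F.card)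
    (x : B) (hx : x ∈ ⋂ S ∈ F, S) (hmin : ∀ y ∈ ⋂ S ∈ F, S, x ≤ y) :
    ∃ G ⊆ F, G.card = 𝔖.h - 1 ∧ x ∈ ⋂ S ∈ G, S ∧
      ∀ y ∈ ⋂ S ∈ G, S, x ≤ y := by
  obtain ⟨G, hGF, hGcard, hxG, hminG⟩ :=
    𝔖.exists_card_eq_h_sub_one_isLeast (hFD.trans 𝔖.D_subset_C) hcard ⟨hx, hmin⟩
  exact ⟨G, hGF, hGcard, hxG, fun y hy => hminG hy⟩
end

section
/- Let $\mathfrak{S} = (\mathcal{B}, \mathcal{C}, \mathcal{D}, h, \preceq)$ be an Ordered-Helly system and let $p \geq q \geq h$ be integers with $(h-2)p < (h-1)(q-1)$. If $\mathcal{F}$ is a finite family of nonempty members of $\mathcal{D}$ with the $(p,q)$-property, then there exist $p-q+1$ elements of $\mathcal{B}$ stabbing $\mathcal{F}$. -/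
/-!
Strengthen the (p, q)-property to its hereditary form, in which every subfamily `G` contains an
intersecting subfamily of size at least `q - (p - |G|)`, and induct on `p - q`.

If `p = q`, every `h` members meet, so the whole family meets by Helly. Otherwise let `a` be the
largest value of `min ⋂ H` over the intersecting subfamilies `H`, attained at `Q`. Nothing in `⋂ Q`
lies below `a`, so Helly applied to `Q` and the down-set `{x | x < a}` yields `E ⊆ Q` with
`e = |E| ≤ h - 1` and no point of `⋂ E` below `a`. The members avoiding `a` have the hereditary
`(p - e, q - e + 1)`-property: for `G` among them, the hypothesis gives an intersecting
`H ⊆ G ∪ E` that is not contained in `E`; then `min ⋂ H < a`, so `H` misses a member of `E` and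
keeps enough of `G`. Stab them by induction and add `a`. The condition `(h - 2) p < (h - 1) (q - 1)`
is exactly what keeps `q - e + 1 ≥ h` and survives the passage to `(p - e, q - e + 1)`.
-/

open Finset

section Families

variable {B : Type*}

def Stabs (P : Finset B) (F : Finset (Set B)) : Prop :=
  ∀ S ∈ F, ∃ x ∈ P, x ∈ S

lemma Stabs.insert [DecidableEq B] {P : Finset B} {F : Finset (Set B)} {a : B}
    [DecidablePred fun S : Set B => a ∉ S] (hP : Stabs P (F.filter fun S => a ∉ S)) :
    Stabs (insert a P) F := by
  intro S hS
  by_cases haS : a ∈ S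
  · exact ⟨a, mem_insert_self a P, haS⟩
  · obtain ⟨x, hxP, hxS⟩ := hP S (mem_filter.2 ⟨hS, haS⟩)
    exact ⟨x, mem_insert_of_mem hxP, hxS⟩

/-- The bound `q - (p - |G|)` is what the (p, q)-property gives after padding `G` to `p` members;
unlike the (p, q)-property, this form passes to subfamilies. -/
def HereditaryPQ (p q : ℕ) (F : Finset (Set B)) : Prop :=
  ∀ G ⊆ F, G.Nonempty → ∃ H ⊆ G, (⋂ S ∈ H, S).Nonempty ∧ min q (q + G.card - p) ≤ H.card

lemma hereditaryPQ_of_pq {p q : ℕ} {F : Finset (Set B)} (hcard : p ≤ F.card)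
    (hP : ∀ G ⊆ F, G.card = p → ∃ H ⊆ G, H.card = q ∧ (⋂ S ∈ H, S).Nonempty) :
    HereditaryPQ p q F := by
  classical
  intro G hGF _
  rcases le_or_gt p G.card with hpG | hGp
  · obtain ⟨G₁, hG₁G, hG₁⟩ := exists_subset_card_eq hpG
    obtain ⟨H, hHG₁, hH, hHI⟩ := hP G₁ (hG₁G.trans hGF) hG₁
    exact ⟨H, hHG₁.trans hG₁G, hHI, by omega⟩
  · obtain ⟨G₁, hGG₁, hG₁F, hG₁⟩ := exists_subsuperset_card_eq hGF hGp.le hcard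
    obtain ⟨H, hHG₁, hH, hHI⟩ := hP G₁ hG₁F hG₁
    have hHG : (H \ G).card ≤ p - G.card := by
      rw [← hG₁, ← card_sdiff_of_subset hGG₁]
      exact card_le_card (sdiff_subset_sdiff hHG₁ Subset.rfl)
    have hsplit := card_inter_add_card_sdiff H G
    exact ⟨H ∩ G, inter_subset_right,
      hHI.mono (Set.biInter_subset_biInter_left inter_subset_left), by omega⟩

lemma HereditaryPQ.filter_notMem [PartialOrder B] {p q : ℕ} {F E : Finset (Set B)} {a : B}
    [DecidablePred fun S : Set B => a ∉ S] (hF : HereditaryPQ p q F)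
    (hne : ∀ S ∈ F, S.Nonempty) (hEF : E ⊆ F) (hE : IsLeast (⋂ S ∈ E, S) a) (hEq : E.card < q)
    (hmax : ∀ H ⊆ F, H.Nonempty → (⋂ S ∈ H, S).Nonempty → ∃ x ∈ ⋂ S ∈ H, S, x ≤ a) :
    HereditaryPQ (p - E.card) (q - E.card + 1) (F.filter fun S => a ∉ S) := by
  classical
  intro G hG hGne
  have hGF : G ⊆ F := hG.trans (filter_subset _ _)
  have hGa : ∀ S ∈ G, a ∉ S := fun S hS => (mem_filter.1 (hG hS)).2
  by_cases ht : min (q - E.card + 1) (q - E.card + 1 + G.card - (p - E.card)) ≤ 1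
  · obtain ⟨S, hS⟩ := hGne
    exact ⟨{S}, singleton_subset_iff.2 hS, by simpa using hne S (hGF hS), by simpa using ht⟩
  have hdisj : Disjoint G E :=
    disjoint_left.2 fun S hSG hSE => hGa S hSG (Set.mem_iInter₂.1 hE.1 S hSE)
  obtain ⟨H, hHGE, hHI, hHcard⟩ := hF (G ∪ E) (union_subset hGF hEF) (hGne.mono subset_union_left)
  rw [card_union_of_disjoint hdisj] at hHcard
  obtain ⟨T, hTH, hTE⟩ := not_subset.1 fun h : H ⊆ E => by have := card_le_card h; omega
  have hTa : a ∉ T := hGa T ((mem_union.1 (hHGE hTH)).resolve_right hTE)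
  obtain ⟨x, hxH, hxa⟩ := hmax H (hHGE.trans (union_subset hGF hEF)) ⟨T, hTH⟩ hHI
  have hxa : x < a := lt_of_le_of_ne hxa fun h => hTa (h ▸ Set.mem_iInter₂.1 hxH T hTH)
  have hEH : ¬ E ⊆ H := fun h => not_le_of_gt hxa (hE.2 (Set.biInter_subset_biInter_left h hxH))
  have hHE : (H ∩ E).card < E.card :=
    card_lt_card ⟨inter_subset_right, fun h => hEH (h.trans inter_subset_left)⟩
  have hsplit : H.card ≤ (H ∩ G).card + (H ∩ E).card := by
    calc H.card = (H ∩ G ∪ H ∩ E).card := by rw [← inter_union_distrib_left, inter_eq_left.2 hHGE]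
      _ ≤ _ := card_union_le _ _
  exact ⟨H ∩ G, inter_subset_right,
    hHI.mono (Set.biInter_subset_biInter_left inter_subset_left), by omega⟩

end Families

def Admissible (h p q : ℕ) : Prop :=
  (h - 2) * p < (h - 1) * (q - 1)

lemma Admissible.step {h k q e : ℕ} (hq : h ≤ q) (he : e < h)
    (hadm : Admissible h (q + (k + 1)) q) :
    h ≤ q - e + 1 ∧ Admissible h (q - e + 1 + k) (q - e + 1) := by
  unfold Admissible at *
  obtain ⟨m, rfl⟩ : ∃ m, h = m + 2 := ⟨h - 2, by
    by_contra! h2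
    obtain rfl | rfl : h = 0 ∨ h = 1 := by omega
    all_goals simp at hadm⟩
  obtain ⟨s, rfl⟩ : ∃ s, q = e + s + 1 := ⟨q - e - 1, by omega⟩
  simp only [Nat.add_sub_cancel, show m + 2 - 1 = m + 1 by omega,
    show s + 2 - 1 = s + 1 by omega, show e + s + 1 - e + 1 = s + 2 by omega] at hadm ⊢
  constructor <;> nlinarith

namespace OrderedHellySystem

variable {B : Type*} [LinearOrder B] (𝔖 : OrderedHellySystem B)

lemma biInter_mem_D {Q : Finset (Set B)} (hQ : Q.Nonempty) (hQD : ↑Q ⊆ 𝔖.D) :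
    (⋂ S ∈ Q, S) ∈ 𝔖.D := by
  classical
  induction hQ using Finset.Nonempty.cons_induction with
  | singleton S => simpa using hQD (by simp)
  | cons S Q hSQ hQ ih =>
    rw [cons_eq_insert, coe_insert, Set.insert_subset_iff] at hQD
    rw [cons_eq_insert, set_biInter_insert]
    exact 𝔖.inter_mem _ hQD.1 _ (ih hQD.2)

lemma exists_isLeast_biInter {Q : Finset (Set B)} (hQ : Q.Nonempty) (hQD : ↑Q ⊆ 𝔖.D)
    (hQI : (⋂ S ∈ Q, S).Nonempty) : ∃ a, IsLeast (⋂ S ∈ Q, S) a := by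
  obtain ⟨a, ha, hmin⟩ := 𝔖.attainable_min _ (𝔖.biInter_mem_D hQ hQD) hQI
  exact ⟨a, ha, fun y hy => hmin y hy⟩

lemma exists_isLeast_biInter_forall_le {F : Finset (Set B)} (hFD : ↑F ⊆ 𝔖.D)
    (hne : ∀ S ∈ F, S.Nonempty) (hF : F.Nonempty) :
    ∃ Q ⊆ F, ∃ a, IsLeast (⋂ S ∈ Q, S) a ∧
      ∀ H ⊆ F, H.Nonempty → (⋂ S ∈ H, S).Nonempty → ∃ x ∈ ⋂ S ∈ H, S, x ≤ a := by
  classical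
  set 𝒮 := F.powerset.filter fun H => H.Nonempty ∧ (⋂ S ∈ H, S).Nonempty
  have hmem : ∀ {H}, H ∈ 𝒮 ↔ H ⊆ F ∧ H.Nonempty ∧ (⋂ S ∈ H, S).Nonempty := by
    simp [𝒮]
  obtain ⟨S, hS⟩ := hF
  have : Nonempty B := (hne S hS).to_subtype.map Subtype.val
  have hleast (H) (hH : H ∈ 𝒮) : ∃ a, IsLeast (⋂ S ∈ H, S) a :=
    have hH := hmem.1 hH
    𝔖.exists_isLeast_biInter hH.2.1 ((coe_subset.2 hH.1).trans hFD) hH.2.2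
  choose! μ hμ using hleast
  have h𝒮 : 𝒮.Nonempty := ⟨{S}, hmem.2 ⟨by simpa using hS, by simpa using hne S hS⟩⟩
  obtain ⟨Q, hQ, hQmax⟩ := 𝒮.exists_max_image μ h𝒮
  refine ⟨Q, (hmem.1 hQ).1, μ Q, hμ Q hQ, fun H hHF hH hHI => ?_⟩
  have hH𝒮 : H ∈ 𝒮 := hmem.2 ⟨hHF, hH, hHI⟩
  exact ⟨μ H, (hμ H hH𝒮).1, hQmax H hH𝒮⟩

lemma exists_card_eq_biInter_eq_empty {T : Finset (Set B)} (hTC : ↑T ⊆ 𝔖.C) (hT : 𝔖.h ≤ T.card)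
    (hempty : ⋂ S ∈ T, S = ∅) : ∃ G ⊆ T, G.card = 𝔖.h ∧ ⋂ S ∈ G, S = ∅ := by
  by_contra! hG
  exact (𝔖.helly T hTC hT fun G hGT hG' => hG G hGT hG').ne_empty hempty

lemma exists_subset_card_lt_isLeast {Q : Finset (Set B)} (hQC : ↑Q ⊆ 𝔖.C) {a : B}
    (ha : IsLeast (⋂ S ∈ Q, S) a) : ∃ E ⊆ Q, E.card < 𝔖.h ∧ IsLeast (⋂ S ∈ E, S) a := by
  classical
  rcases lt_or_ge Q.card 𝔖.h with hQ | hQ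
  · exact ⟨Q, Subset.rfl, hQ, ha⟩
  set L : Set B := {x | x < a}
  have hLQ : L ∉ Q := fun hL => lt_irrefl a (Set.mem_iInter₂.1 ha.1 L hL)
  have hTC : ↑(insert L Q) ⊆ 𝔖.C := by
    rw [coe_insert, Set.insert_subset_iff]
    exact ⟨𝔖.convex_order a, hQC⟩
  have hT : ⋂ S ∈ insert L Q, S = ∅ := by
    rw [set_biInter_insert, Set.eq_empty_iff_forall_notMem]
    exact fun x hx => not_le_of_gt hx.1 (ha.2 hx.2)
  obtain ⟨G, hGT, hGh, hG⟩ :=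
    𝔖.exists_card_eq_biInter_eq_empty hTC (by rw [card_insert_of_notMem hLQ]; omega) hT
  have hLG : L ∈ G := by
    by_contra hLG
    have hGQ : G ⊆ Q := (subset_insert_iff_of_notMem hLG).1 hGT
    exact Set.eq_empty_iff_forall_notMem.1 hG a (Set.biInter_subset_biInter_left hGQ ha.1)
  refine ⟨G.erase L, subset_insert_iff.1 hGT,
    by rw [card_erase_of_mem hLG, hGh]; exact Nat.sub_one_lt_of_lt 𝔖.two_le_h,
    Set.biInter_subset_biInter_left (subset_insert_iff.1 hGT) ha.1, fun x hx => ?_⟩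
  by_contra hxa
  rw [← insert_erase hLG, set_biInter_insert] at hG
  exact Set.eq_empty_iff_forall_notMem.1 hG x ⟨not_le.1 hxa, hx⟩

lemma biInter_nonempty_of_hereditaryPQ {q : ℕ} {F : Finset (Set B)} (hFC : ↑F ⊆ 𝔖.C)
    (hq : 𝔖.h ≤ q) (hF : HereditaryPQ q q F) (hFne : F.Nonempty) : (⋂ S ∈ F, S).Nonempty := by
  have hsmall : ∀ G ⊆ F, G.Nonempty → G.card ≤ q → (⋂ S ∈ G, S).Nonempty := by
    intro G hGF hG hGq
    obtain ⟨H, hHG, hHI, hH⟩ := hF G hGF hG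
    rwa [← eq_of_subset_of_card_le hHG (by omega)]
  rcases le_or_gt F.card q with hFq | hFq
  · exact hsmall F Subset.rfl hFne hFq
  refine 𝔖.helly F hFC (by omega) fun G hGF hG => hsmall G hGF ?_ (by omega)
  exact card_pos.1 (by have := 𝔖.two_le_h; omega)

theorem exists_stabs_of_hereditaryPQ {k q : ℕ} {F : Finset (Set B)} (hq : 𝔖.h ≤ q)
    (hadm : Admissible 𝔖.h (q + k) q) (hFD : ↑F ⊆ 𝔖.D) (hne : ∀ S ∈ F, S.Nonempty)
    (hF : HereditaryPQ (q + k) q F) : ∃ P : Finset B, P.card ≤ k + 1 ∧ Stabs P F := by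
  classical
  induction k generalizing q F with
  | zero =>
    obtain rfl | hFne := F.eq_empty_or_nonempty
    · exact ⟨∅, by simp, by simp [Stabs]⟩
    obtain ⟨x, hx⟩ :=
      𝔖.biInter_nonempty_of_hereditaryPQ (fun S hS => 𝔖.D_subset_C (hFD hS)) hq hF hFne
    exact ⟨{x}, by simp, fun S hS => ⟨x, mem_singleton_self x, Set.mem_iInter₂.1 hx S hS⟩⟩
  | succ k ih =>
    obtain rfl | hFne := F.eq_empty_or_nonempty
    · exact ⟨∅, by simp, by simp [Stabs]⟩
    obtain ⟨Q, hQF, a, ha, hmax⟩ := 𝔖.exists_isLeast_biInter_forall_le hFD hne hFne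
    obtain ⟨E, hEQ, hEh, hE⟩ :=
      𝔖.exists_subset_card_lt_isLeast (fun S hS => 𝔖.D_subset_C (hFD (hQF hS))) ha
    obtain ⟨hq', hadm'⟩ := hadm.step hq hEh
    have hF' := hF.filter_notMem hne (hEQ.trans hQF) hE (by omega) hmax
    rw [show q + (k + 1) - E.card = q - E.card + 1 + k by omega] at hF'
    obtain ⟨P, hP, hPF⟩ := ih hq' hadm' (fun S hS => hFD (filter_subset _ _ hS))
      (fun S hS => hne S (filter_subset _ _ hS)) hF'
    exact ⟨insert a P, (card_insert_le a P).trans (by omega), hPF.insert⟩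

end OrderedHellySystem

theorem stmt_8 {B : Type*} [LinearOrder B] (𝔖 : OrderedHellySystem B)
    {p q : ℕ} (hq : 𝔖.h ≤ q) (hpq : q ≤ p)
    (hadm : (𝔖.h - 2) * p < (𝔖.h - 1) * (q - 1))
    (F : Finset (Set B)) (hFD : ↑F ⊆ 𝔖.D) (hne : ∀ S ∈ F, S.Nonempty)
    (hcard : p ≤ F.card)
    (hP : ∀ G ⊆ F, G.card = p → ∃ H ⊆ G, H.card = q ∧ (⋂ S ∈ H, S).Nonempty) :
    ∃ P : Finset B, P.card ≤ p - q + 1 ∧ ∀ S ∈ F, ∃ x ∈ P, x ∈ S := by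
  obtain ⟨k, rfl⟩ := Nat.exists_eq_add_of_le hpq
  rw [Nat.add_sub_cancel_left]
  exact 𝔖.exists_stabs_of_hereditaryPQ hq hadm hFD hne (hereditaryPQ_of_pq hcard hP)
end

section
/- In a convex geometry $(E, \mathcal{N})$ on a finite set $E$, a subset $X \subseteq E$ is convex if and only if there exists a shelling sequence $x_1, \ldots, x_k$ such that $X = E \setminus \{x_1, \ldots, x_k\}$. -/
/-!
A convex set `A ≠ E` always has a convex one-point extension `A ∪ {x}`: among the points
outside `A` take one whose hull `τ(A ∪ {x})` is minimal; if that hull contained a further point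
`z`, anti-exchange would make `τ(A ∪ {z})` a strictly smaller hull. Peeling such points off in
reverse order of addition gives a shelling sequence with complement `A`. Conversely, removing an
extreme point from a convex set leaves a convex set, so every stage of a shelling is convex.
-/

/-- Closure operator of a set family: intersection of all members containing `A`. -/
def cgClosure {E : Type*} (N : Set (Set E)) (A : Set E) : Set E :=
  ⋂₀ {X | X ∈ N ∧ A ⊆ X}

/-- A convex geometry on `E`. -/
structure IsConvexGeometry {E : Type*} (N : Set (Set E)) : Prop where
  empty_mem : ∅ ∈ N
  univ_mem : Set.univ ∈ N
  inter_mem : ∀ X ∈ N, ∀ Y ∈ N, X ∩ Y ∈ N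
  anti_exchange : ∀ (X : Set E) (y z : E), y ≠ z →
    y ∉ cgClosure N X → z ∉ cgClosure N X →
    z ∈ cgClosure N (X ∪ {y}) → y ∉ cgClosure N (X ∪ {z})

/-- `x` is an extreme point of `A`. -/
def IsExtremePt {E : Type*} (N : Set (Set E)) (A : Set E) (x : E) : Prop :=
  x ∈ A ∧ x ∉ cgClosure N (A \ {x})

/-- A shelling sequence: each element is extreme in what remains of `E`. -/
def IsShellingSeq {E : Type*} (N : Set (Set E)) (L : List E) : Prop :=
  ∀ i : Fin L.length, IsExtremePt N {y | y ∉ L.take i.val} (L.get i)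

namespace IsConvexGeometry

variable {E : Type*} {N : Set (Set E)}

lemma subset_cgClosure (A : Set E) : A ⊆ cgClosure N A :=
  fun _ ha => Set.mem_sInter.2 fun _ hX => hX.2 ha

lemma cgClosure_subset {A B : Set E} (hB : B ∈ N) (h : A ⊆ B) : cgClosure N A ⊆ B :=
  Set.sInter_subset_of_mem ⟨hB, h⟩

lemma cgClosure_eq_self {A : Set E} (hA : A ∈ N) : cgClosure N A = A :=
  (cgClosure_subset hA subset_rfl).antisymm (subset_cgClosure A)

lemma cgClosure_mem [Finite E] (hN : IsConvexGeometry N) (A : Set E) : cgClosure N A ∈ N :=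
  InfClosed.sInf_mem (fun _ hX _ hY => hN.inter_mem _ hX _ hY) (Set.toFinite _) hN.univ_mem
    fun _ hX => hX.1

lemma isExtremePt_iff_sdiff_singleton_mem [Finite E] (hN : IsConvexGeometry N) {C : Set E}
    (hC : C ∈ N) {x : E} (hx : x ∈ C) : IsExtremePt N C x ↔ C \ {x} ∈ N := by
  refine ⟨fun ⟨_, hext⟩ => ?_, fun h => ⟨hx, by simp [cgClosure_eq_self h]⟩⟩
  have hcl : cgClosure N (C \ {x}) = C \ {x} :=
    (subset_cgClosure _).antisymm' fun y hy =>
      ⟨cgClosure_subset hC Set.sdiff_subset hy, fun hyx => hext (hyx ▸ hy)⟩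
  exact hcl ▸ hN.cgClosure_mem _

lemma exists_insert_mem [Finite E] (hN : IsConvexGeometry N) {A : Set E} (hA : A ∈ N)
    (hne : A ≠ Set.univ) : ∃ x ∉ A, insert x A ∈ N := by
  obtain ⟨x, hxA, hmin⟩ := Set.Finite.exists_minimalFor (fun x => cgClosure N (insert x A)) Aᶜ
    (Set.toFinite _) (Set.nonempty_compl.2 hne)
  refine ⟨x, hxA, ?_⟩
  suffices h : cgClosure N (insert x A) ⊆ insert x A from
    (h.antisymm (subset_cgClosure _)) ▸ hN.cgClosure_mem _
  intro z hz
  by_contra hz_out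
  obtain ⟨hzx, hzA⟩ : z ≠ x ∧ z ∉ A := by simpa using hz_out
  have hx_not : x ∉ cgClosure N (insert z A) := by
    have := hN.anti_exchange A x z (Ne.symm hzx) (by rwa [cgClosure_eq_self hA])
      (by rwa [cgClosure_eq_self hA]) (by rwa [Set.union_singleton])
    rwa [Set.union_singleton] at this
  have hle : cgClosure N (insert z A) ⊆ cgClosure N (insert x A) :=
    cgClosure_subset (hN.cgClosure_mem _)
      (Set.insert_subset hz ((Set.subset_insert x A).trans (subset_cgClosure _)))
  exact hx_not (hmin hzA hle (subset_cgClosure _ (Set.mem_insert x A)))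

end IsConvexGeometry

section Shelling

variable {E : Type*} {N : Set (Set E)}

lemma setOf_notMem_append_singleton (L : List E) (x : E) :
    {y | y ∉ L ++ [x]} = {y | y ∉ L} \ {x} := by
  ext y
  simp

lemma isShellingSeq_append_singleton {L : List E} {x : E} :
    IsShellingSeq N (L ++ [x]) ↔ IsShellingSeq N L ∧ IsExtremePt N {y | y ∉ L} x := by
  constructor
  · intro h
    refine ⟨fun i => ?_, ?_⟩
    · simpa [List.take_append_of_le_length i.2.le, List.getElem_append_left i.2]
        using h ⟨i, by simp⟩
    · simpa using h ⟨L.length, by simp⟩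
  · rintro ⟨hL, hx⟩ ⟨i, hi⟩
    obtain hi | rfl : i < L.length ∨ i = L.length := by simp at hi; omega
    · simpa [List.take_append_of_le_length hi.le, List.getElem_append_left hi] using hL ⟨i, hi⟩
    · simpa using hx

theorem IsShellingSeq.compl_mem [Finite E] (hN : IsConvexGeometry N) {L : List E}
    (hL : IsShellingSeq N L) : {y | y ∉ L} ∈ N := by
  induction L using List.reverseRecOn with
  | nil => simpa using hN.univ_mem
  | append_singleton L x ih =>
    obtain ⟨hL, hx⟩ := isShellingSeq_append_singleton.1 hL
    rw [setOf_notMem_append_singleton]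
    exact (hN.isExtremePt_iff_sdiff_singleton_mem (ih hL) hx.1).1 hx

theorem IsConvexGeometry.exists_isShellingSeq [Finite E] (hN : IsConvexGeometry N) {X : Set E}
    (hX : X ∈ N) : ∃ L : List E, IsShellingSeq N L ∧ X = {y | y ∉ L} := by
  induction X using WellFoundedGT.induction with
  | ind X ih =>
    by_cases hX_univ : X = Set.univ
    · exact ⟨[], fun i => i.elim0, by simp [hX_univ]⟩
    obtain ⟨x, hx_notMem, hinsert⟩ := hN.exists_insert_mem hX hX_univ
    obtain ⟨L, hL, hLX⟩ := ih _ (Set.ssubset_insert hx_notMem) hinsert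
    have hx : IsExtremePt N {y | y ∉ L} x := by
      rw [← hLX, hN.isExtremePt_iff_sdiff_singleton_mem hinsert (Set.mem_insert x X),
        Set.insert_sdiff_self_of_notMem hx_notMem]
      exact hX
    refine ⟨L ++ [x], isShellingSeq_append_singleton.2 ⟨hL, hx⟩, ?_⟩
    rw [setOf_notMem_append_singleton, ← hLX, Set.insert_sdiff_self_of_notMem hx_notMem]

end Shelling

theorem stmt_13 {E : Type*} [Fintype E] (N : Set (Set E))
    (hN : IsConvexGeometry N) (X : Set E) :
    X ∈ N ↔ ∃ L : List E, IsShellingSeq N L ∧ X = {y | y ∉ L} := by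
  refine ⟨hN.exists_isShellingSeq, ?_⟩
  rintro ⟨L, hL, rfl⟩
  exact hL.compl_mem hN
end

section
/- Let $T$ be a finite tree and let $p \geq q \geq 2$ be integers (note every pair $(p,q)$ with $p \geq q \geq 2$ satisfies $0 \cdot p < 1 \cdot (q-1)$). If $\mathcal{F}$ is a finite family of at least $p$ nonempty subtrees of $T$ with the $(p,q)$-property, then $\mathcal{F}$ can be stabbed by $p-q+1$ vertices of $T$. -/
/-!
Root the tree at a vertex `r` and call the vertex of a subtree closest to `r` its top. If `S₀` is
a subtree whose top `v` is as far from `r` as possible, then `v` lies in every subtree meeting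
`S₀`: the path from `r` into `S₀ ∩ S` passes through the tops of both `S₀` and `S`, the latter no
later than `v`, and after its top it stays inside `S`. Hence adding `v` to a stabbing set for the
subtrees missing `v`, which are all disjoint from `S₀`, shows by induction that a family of
subtrees can be stabbed by as many vertices as the size of its largest pairwise disjoint
subfamily. The `(p, q)`-property bounds the latter by `p - q + 1`, since `p - q + 2` pairwise
disjoint members together with `q - 2` further ones would form `p` members no `q` of which meet.
-/

open Finset

namespace SimpleGraph

variable {V : Type*} {G : SimpleGraph V}

lemma Walk.dist_lt_of_mem_support_of_length_eq_dist {r w x : V} {P : G.Walk r w}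
    (hP : P.length = G.dist r w) (hx : x ∈ P.support) (hxw : x ≠ w) :
    G.dist r x < G.dist r w := by
  classical
  calc G.dist r x ≤ (P.takeUntil x hx).length := dist_le _
    _ < P.length := Walk.length_takeUntil_lt_length hx hxw
    _ = G.dist r w := hP

lemma exists_isPath_support_subset_of_connected_induce {S : Set V}
    (hS : (G.induce S).Connected) {u v : V} (hu : u ∈ S) (hv : v ∈ S) :
    ∃ Q : G.Walk u v, Q.IsPath ∧ ∀ x ∈ Q.support, x ∈ S := by
  classical
  obtain ⟨Q⟩ := hS.preconnected ⟨u, hu⟩ ⟨v, hv⟩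
  refine ⟨(Q.map (Embedding.induce S).toHom).bypass, Walk.bypass_isPath _, fun x hx => ?_⟩
  have hx' := Walk.support_map _ _ ▸ Walk.support_bypass_subset_support _ hx
  obtain ⟨y, -, rfl⟩ := List.mem_map.1 hx'
  exact y.2

lemma Walk.isPath_append_of_isMinOn_dist {r w u : V} {S : Set V} {P : G.Walk r w}
    (hP : P.length = G.dist r w) (hw : IsMinOn (G.dist r) S w) {Q : G.Walk w u}
    (hQ : Q.IsPath) (hQS : ∀ x ∈ Q.support, x ∈ S) : (P.append Q).IsPath := by
  rw [Walk.isPath_def, Walk.support_append]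
  have hQnodup := hQ.support_nodup
  rw [← Walk.cons_tail_support] at hQnodup
  refine (P.isPath_of_length_eq_dist hP).support_nodup.append (List.nodup_cons.1 hQnodup).2
    fun x hxP hxQ => ?_
  have hxw : x ≠ w := by rintro rfl; exact (List.nodup_cons.1 hQnodup).1 hxQ
  exact (hw (hQS x (List.mem_of_mem_tail hxQ))).not_gt
    (dist_lt_of_mem_support_of_length_eq_dist hP hxP hxw)

theorem IsTree.mem_of_isMinOn_dist (hG : G.IsTree) {r w v : V} {S S' : Set V}
    (hS : (G.induce S).Connected) (hS' : (G.induce S').Connected)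
    (hw : w ∈ S) (hwS : IsMinOn (G.dist r) S w) (hv : v ∈ S') (hvS' : IsMinOn (G.dist r) S' v)
    (hwv : G.dist r w ≤ G.dist r v) (hSS' : (S ∩ S').Nonempty) : v ∈ S := by
  obtain ⟨u, huS, huS'⟩ := hSS'
  obtain ⟨P, hP⟩ := hG.connected.exists_walk_length_eq_dist r w
  obtain ⟨Q, hQ, hQS⟩ := exists_isPath_support_subset_of_connected_induce hS hw huS
  obtain ⟨P', hP'⟩ := hG.connected.exists_walk_length_eq_dist r v
  obtain ⟨Q', hQ', hQ'S'⟩ := exists_isPath_support_subset_of_connected_induce hS' hv huS'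
  have hpaths : P'.append Q' = P.append Q := congrArg Subtype.val <|
    (hG.isAcyclic.subsingleton_path r u).elim
      ⟨_, Walk.isPath_append_of_isMinOn_dist hP' hvS' hQ' hQ'S'⟩
      ⟨_, Walk.isPath_append_of_isMinOn_dist hP hwS hQ hQS⟩
  have hvPQ : v ∈ (P.append Q).support :=
    hpaths ▸ (Walk.mem_support_append_iff _ _).2 (Or.inl P'.end_mem_support)
  rcases (Walk.mem_support_append_iff _ _).1 hvPQ with hvP | hvQ
  · by_contra hvS
    exact hwv.not_gt (Walk.dist_lt_of_mem_support_of_length_eq_dist hP hvP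
      (ne_of_mem_of_not_mem hw hvS).symm)
  · exact hQS v hvQ

theorem IsTree.exists_mem_forall_disjoint_or_mem (hG : G.IsTree) {F : Finset (Set V)}
    (hF : ∀ S ∈ F, (G.induce S).Connected) (hne : F.Nonempty) :
    ∃ S₀ ∈ F, ∃ v ∈ S₀, ∀ S ∈ F, Disjoint S S₀ ∨ v ∈ S := by
  obtain ⟨r⟩ := hG.connected.nonempty
  have : Nonempty V := ⟨r⟩
  have htop : ∀ S ∈ F, ∃ v ∈ S, IsMinOn (G.dist r) S v := fun S hS =>
    have hSne : S.Nonempty := Set.nonempty_coe_sort.1 (hF S hS).nonempty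
    ⟨_, Function.argminOn_mem (G.dist r) S hSne, fun _ hx => Function.argminOn_le (G.dist r) S hx⟩
  choose! top hmem hmin using htop
  obtain ⟨S₀, hS₀, hmax⟩ := F.exists_max_image (fun S => G.dist r (top S)) hne
  refine ⟨S₀, hS₀, top S₀, hmem S₀ hS₀, fun S hS => ?_⟩
  rw [or_iff_not_imp_left, Set.not_disjoint_iff_nonempty_inter]
  exact hG.mem_of_isMinOn_dist (hF S hS) (hF S₀ hS₀) (hmem S hS) (hmin S hS) (hmem S₀ hS₀)
    (hmin S₀ hS₀) (hmax S hS)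

end SimpleGraph

section Stabbing

variable {α : Type*}

theorem exists_stabbing_card_le_of_pairwiseDisjoint_card_le (F : Finset (Set α))
    (hF : ∀ F' ⊆ F, F'.Nonempty → ∃ S₀ ∈ F', ∃ v ∈ S₀, ∀ S ∈ F', Disjoint S S₀ ∨ v ∈ S)
    (k : ℕ) (hk : ∀ D ⊆ F, (D : Set (Set α)).PairwiseDisjoint id → #D ≤ k) :
    ∃ P : Finset α, #P ≤ k ∧ ∀ S ∈ F, ∃ x ∈ P, x ∈ S := by
  classical
  induction F using Finset.strongInduction generalizing k with
  | H F ih =>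
  rcases F.eq_empty_or_nonempty with rfl | hne
  · exact ⟨∅, by simp⟩
  obtain ⟨S₀, hS₀, v, hv, hsplit⟩ := hF F subset_rfl hne
  have hF' : F.filter (v ∉ ·) ⊂ F := filter_ssubset.2 ⟨S₀, hS₀, not_not.2 hv⟩
  have hk' : ∀ D ⊆ F.filter (v ∉ ·), (D : Set (Set α)).PairwiseDisjoint id → #D ≤ k - 1 := by
    intro D hD hDdisj
    have hS₀D : S₀ ∉ D := fun h => (mem_filter.1 (hD h)).2 hv
    have hdisj : ((insert S₀ D : Finset (Set α)) : Set (Set α)).PairwiseDisjoint id := by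
      rw [coe_insert]
      refine hDdisj.insert fun S hS _ => ?_
      have hSF := mem_filter.1 (hD hS)
      exact ((hsplit S hSF.1).resolve_right hSF.2).symm
    have := hk _ (insert_subset hS₀ (hD.trans hF'.subset)) hdisj
    rw [card_insert_of_notMem hS₀D] at this
    omega
  obtain ⟨P, hPk, hP⟩ := ih _ hF' (fun F'' h => hF F'' (h.trans hF'.subset)) (k - 1) hk'
  have hk1 : 1 ≤ k := by
    simpa using hk {S₀} (singleton_subset_iff.2 hS₀) (by simp)
  refine ⟨insert v P, (card_insert_le _ _).trans (by omega), fun S hS => ?_⟩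
  by_cases hvS : v ∈ S
  · exact ⟨v, mem_insert_self _ _, hvS⟩
  · obtain ⟨x, hx, hxS⟩ := hP S (mem_filter.2 ⟨hS, hvS⟩)
    exact ⟨x, mem_insert_of_mem hx, hxS⟩

lemma card_le_one_of_pairwiseDisjoint_of_forall_mem {D : Finset (Set α)}
    (hD : (D : Set (Set α)).PairwiseDisjoint id) {x : α} (hx : ∀ S ∈ D, x ∈ S) : #D ≤ 1 :=
  card_le_one.2 fun _ hA _ hB => hD.elim_set hA hB x (hx _ hA) (hx _ hB)

theorem card_le_of_pairwiseDisjoint_of_pq {p q : ℕ} (hq : 2 ≤ q) (hpq : q ≤ p)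
    {F : Finset (Set α)} (hcard : p ≤ #F)
    (hP : ∀ G' ⊆ F, #G' = p → ∃ H ⊆ G', #H = q ∧ (⋂ S ∈ H, S).Nonempty)
    {D : Finset (Set α)} (hD : D ⊆ F) (hDdisj : (D : Set (Set α)).PairwiseDisjoint id) :
    #D ≤ p - q + 1 := by
  classical
  by_contra! hlt
  obtain ⟨D', hD'D, hD'⟩ := exists_subset_card_eq (show p - q + 2 ≤ #D by omega)
  obtain ⟨G', hD'G', hG'F, hG'⟩ :=
    exists_subsuperset_card_eq (hD'D.trans hD) (show #D' ≤ p by omega) hcard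
  obtain ⟨H, hHG', hH, x, hx⟩ := hP G' hG'F hG'
  have hmeet : #(H ∩ D') ≤ 1 :=
    card_le_one_of_pairwiseDisjoint_of_forall_mem
      (hDdisj.subset (coe_subset.2 (inter_subset_right.trans hD'D)))
      fun S hS => Set.mem_iInter₂.1 hx S (mem_inter.1 hS).1
  have hrest : #(H \ D') ≤ #(G' \ D') := card_le_card (sdiff_subset_sdiff hHG' le_rfl)
  rw [card_sdiff_of_subset hD'G'] at hrest
  have := card_inter_add_card_sdiff H D'
  omega

end Stabbing

theorem stmt_16_general {V : Type*} (G : SimpleGraph V) (hG : G.IsTree)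
    (p q : ℕ) (hq : 2 ≤ q) (hpq : q ≤ p)
    (F : Finset (Set V))
    (hF : ∀ S ∈ F, S.Nonempty ∧ (G.induce S).Connected)
    (hcard : p ≤ F.card)
    (hP : ∀ G' ⊆ F, G'.card = p → ∃ H ⊆ G', H.card = q ∧ (⋂ S ∈ H, S).Nonempty) :
    ∃ P : Finset V, P.card ≤ p - q + 1 ∧ ∀ S ∈ F, ∃ x ∈ P, x ∈ S :=
  exists_stabbing_card_le_of_pairwiseDisjoint_card_le F
    (fun _ hF' hne => hG.exists_mem_forall_disjoint_or_mem (fun S hS => (hF S (hF' hS)).2) hne)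
    (p - q + 1) (fun _ hD hDdisj => card_le_of_pairwiseDisjoint_of_pq hq hpq hcard hP hD hDdisj)

theorem stmt_16 {V : Type*} [Fintype V] (G : SimpleGraph V) (hG : G.IsTree)
    (p q : ℕ) (hq : 2 ≤ q) (hpq : q ≤ p)
    (F : Finset (Set V))
    (hF : ∀ S ∈ F, S.Nonempty ∧ (G.induce S).Connected)
    (hcard : p ≤ F.card)
    (hP : ∀ G' ⊆ F, G'.card = p → ∃ H ⊆ G', H.card = q ∧ (⋂ S ∈ H, S).Nonempty) :
    ∃ P : Finset V, P.card ≤ p - q + 1 ∧ ∀ S ∈ F, ∃ x ∈ P, x ∈ S :=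
  stmt_16_general G hG p q hq hpq F hF hcard hP
end

section
/- Let $(E, \leq)$ be a finite partially ordered set and let $w$ be the maximum size of an antichain in $E$. Let $\mathcal{F}$ be a finite family of nonempty lower sets (ideals) of $E$ such that every $w$ members of $\mathcal{F}$ have a common element. Then all members of $\mathcal{F}$ have a common element. -/
/-!
Take a subfamily `G ⊆ F` that is minimal with empty intersection; by hypothesis `|G| > w`.
Minimality gives, for each `S ∈ G`, a point `x_S` lying in every member of `G` except `S`.
If `x_S ≤ x_T` with `S ≠ T`, then `x_T ∈ S` and `S` is a lower set, so `x_S ∈ S`, which is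
absurd. Hence the `x_S` form an antichain of size `|G| > w`.
-/

section LowerSetFamily

variable {α ι : Type*} [Preorder α]

lemma eq_of_le_of_separating {s : Finset ι} {S : ι → Set α} {x : ι → α}
    (hS : ∀ i ∈ s, IsLowerSet (S i)) (hmem : ∀ i ∈ s, ∀ j ∈ s, i ≠ j → x i ∈ S j)
    (hnot : ∀ i ∈ s, x i ∉ S i) {i j : ι} (hi : i ∈ s) (hj : j ∈ s) (hle : x i ≤ x j) :
    i = j := by
  by_contra hij
  exact hnot i hi (hS i hi hle (hmem j hj i hi (Ne.symm hij)))

lemma isAntichain_image_of_separating {s : Finset ι} {S : ι → Set α} {x : ι → α}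
    [DecidableEq α] (hS : ∀ i ∈ s, IsLowerSet (S i))
    (hmem : ∀ i ∈ s, ∀ j ∈ s, i ≠ j → x i ∈ S j) (hnot : ∀ i ∈ s, x i ∉ S i) :
    IsAntichain (· ≤ ·) (↑(s.image x) : Set α) ∧ (s.image x).card = s.card := by
  have hsep : ∀ {i j}, i ∈ s → j ∈ s → x i ≤ x j → i = j := eq_of_le_of_separating hS hmem hnot
  refine ⟨?_, Finset.card_image_of_injOn fun i hi j hj hij => hsep hi hj hij.le⟩
  rintro _ hxi _ hxj hne hle
  simp only [Finset.coe_image, Set.mem_image, Finset.mem_coe] at hxi hxj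
  obtain ⟨i, hi, rfl⟩ := hxi
  obtain ⟨j, hj, rfl⟩ := hxj
  exact hne (congrArg x (hsep hi hj hle))

theorem exists_antichain_card_eq_of_minimal_iInter_eq_empty (G : Finset (Set α))
    (hG : ∀ S ∈ G, IsLowerSet S) (hempty : ⋂ S ∈ G, S = ∅)
    (hmin : ∀ S ∈ G, (⋂ T ∈ G.erase S, T).Nonempty) :
    ∃ A : Finset α, IsAntichain (· ≤ ·) (↑A : Set α) ∧ A.card = G.card := by
  classical
  have hwitness : ∀ S : G, ∃ x : α, x ∉ S.1 ∧ ∀ T ∈ G, T ≠ S.1 → x ∈ T := by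
    rintro ⟨S, hS⟩
    obtain ⟨x, hx⟩ := hmin S hS
    have hxT : ∀ T ∈ G, T ≠ S → x ∈ T := fun T hT hne =>
      Set.mem_iInter₂.mp hx T (Finset.mem_erase.mpr ⟨hne, hT⟩)
    refine ⟨x, fun hxS => ?_, hxT⟩
    have hxG : x ∈ ⋂ T ∈ G, T := Set.mem_iInter₂.mpr fun T hT => by
      by_cases hTS : T = S
      · exact hTS ▸ hxS
      · exact hxT T hT hTS
    simp [hempty] at hxG
  choose x hxnot hxmem using hwitness
  obtain ⟨hanti, hcard⟩ := isAntichain_image_of_separating (s := G.attach) (S := Subtype.val)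
    (fun S _ => hG S.1 S.2) (fun S _ T _ hne => hxmem S T.1 T.2 (Subtype.coe_ne_coe.mpr hne.symm))
    (fun S _ => hxnot S)
  exact ⟨_, hanti, hcard.trans G.card_attach⟩

end LowerSetFamily

theorem stmt_17_general {E : Type*} [PartialOrder E] (w : ℕ)
    (hwid : (∀ A : Finset E, IsAntichain (· ≤ ·) (↑A : Set E) → A.card ≤ w) ∧
      ∃ A : Finset E, IsAntichain (· ≤ ·) (↑A : Set E) ∧ A.card = w)
    (F : Finset (Set E)) (hF : ∀ S ∈ F, S.Nonempty ∧ IsLowerSet S)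
    (hP : ∀ G ⊆ F, G.card ≤ w → (⋂ S ∈ G, S).Nonempty) :
    (⋂ S ∈ F, S).Nonempty := by
  by_contra hF_empty
  obtain ⟨G, hGF, hGmin⟩ := exists_minimal_le_of_wellFoundedLT
    (fun G : Finset (Set E) => ⋂ S ∈ G, S = ∅) F (Set.not_nonempty_iff_eq_empty.mp hF_empty)
  have hGempty : ⋂ S ∈ G, S = ∅ := hGmin.prop
  have hwG : w < G.card := by
    by_contra! hGw
    simpa [hGempty] using hP G hGF hGw
  obtain ⟨A, hA, hAcard⟩ := exists_antichain_card_eq_of_minimal_iInter_eq_empty G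
    (fun S hS => (hF S (hGF hS)).2) hGempty fun S hS => by
      by_contra hSempty
      exact hGmin.not_prop_of_lt (Finset.erase_ssubset hS)
        (Set.not_nonempty_iff_eq_empty.mp hSempty)
  exact (hwid.1 A hA).not_gt (hAcard ▸ hwG)

theorem stmt_17 {E : Type*} [Fintype E] [PartialOrder E] (w : ℕ)
    (hwid : (∀ A : Finset E, IsAntichain (· ≤ ·) (↑A : Set E) → A.card ≤ w) ∧
      ∃ A : Finset E, IsAntichain (· ≤ ·) (↑A : Set E) ∧ A.card = w)
    (F : Finset (Set E)) (hF : ∀ S ∈ F, S.Nonempty ∧ IsLowerSet S)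
    (hP : ∀ G ⊆ F, G.card ≤ w → (⋂ S ∈ G, S).Nonempty) :
    (⋂ S ∈ F, S).Nonempty :=
  stmt_17_general w hwid F hF hP
end

section
/- Let $(E, \leq)$ be a finite poset of width $w \geq 2$, and let $p \geq q \geq w$ be integers with $(w-2)p < (w-1)(q-1)$. If $\mathcal{F}$ is a finite family of nonempty lower sets of $E$ with the $(p,q)$-property, then there exist $p-q+1$ elements of $E$ stabbing $\mathcal{F}$. -/
/-!
A nonempty lower set contains a minimal element, and the minimal elements form an antichain, so
there are at most `w` of them and it suffices to stab with minimal elements, looking only at the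
trace of each member on them. Put `τ = p - q + 1`; by the `(p,q)`-property every `p` members leave
some minimal element avoided by fewer than `τ` of them. If some minimal element `m` is avoided by
fewer than `τ` members of the whole family, `m` together with one point per avoider stabs it.
Otherwise, a member whose trace contains the trace of another member can be discarded, by
induction. If no two traces are comparable, each of `τ` avoiders of one minimal element avoids a
second one, and topping them up yields at most `(w - 1) τ < p` members in which every minimal
element is avoided `τ` times, contradicting the `(p,q)`-property.
-/

open Finset

section Stabbing

open scoped Classical

variable {α : Type*} {M : Finset α} {F : Finset (Set α)} {τ : ℕ}

lemma exists_stabbing_card_le_card (hM : ∀ S ∈ F, ∃ x ∈ M, x ∈ S) :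
    ∃ P ⊆ M, #P ≤ #F ∧ ∀ S ∈ F, ∃ x ∈ P, x ∈ S := by
  induction F using Finset.induction_on with
  | empty => exact ⟨∅, empty_subset _, by simp, by simp⟩
  | insert S F hS ih =>
    obtain ⟨P, hPM, hPcard, hP⟩ := ih fun T hT => hM T (mem_insert_of_mem hT)
    obtain ⟨x, hxM, hxS⟩ := hM S (mem_insert_self S F)
    refine ⟨insert x P, insert_subset hxM hPM, ?_, ?_⟩
    · rw [card_insert_of_notMem hS]
      exact (card_insert_le x P).trans (by omega)
    · simp only [forall_mem_insert, exists_mem_insert]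
      exact ⟨Or.inl hxS, fun T hT => Or.inr (hP T hT)⟩

lemma exists_stabbing_of_card_avoiders_lt (hM : ∀ S ∈ F, ∃ x ∈ M, x ∈ S) {m : α} (hm : m ∈ M)
    (h : #{S ∈ F | m ∉ S} < τ) : ∃ P ⊆ M, #P ≤ τ ∧ ∀ S ∈ F, ∃ x ∈ P, x ∈ S := by
  obtain ⟨P, hPM, hPcard, hP⟩ :=
    exists_stabbing_card_le_card (M := M) (F := {S ∈ F | m ∉ S}) fun S hS =>
      hM S (mem_filter.1 hS).1
  refine ⟨insert m P, insert_subset hm hPM, (card_insert_le m P).trans (by omega), fun S hS => ?_⟩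
  by_cases hmS : m ∈ S
  · exact ⟨m, mem_insert_self m P, hmS⟩
  · obtain ⟨x, hxP, hxS⟩ := hP S (mem_filter.2 ⟨hS, hmS⟩)
    exact ⟨x, mem_insert_of_mem hxP, hxS⟩

lemma exists_superset_le_card_avoiders {U : Finset (Set α)} (hUF : U ⊆ F) {m : α}
    (h : τ ≤ #{S ∈ F | m ∉ S}) :
    ∃ U', U ⊆ U' ∧ U' ⊆ F ∧ #U' ≤ #U + (τ - #{S ∈ U | m ∉ S}) ∧ τ ≤ #{S ∈ U' | m ∉ S} := by
  have hsub : {S ∈ U | m ∉ S} ⊆ {S ∈ F | m ∉ S} := filter_subset_filter _ hUF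
  obtain ⟨C, hUC, hCF, hC⟩ := exists_subsuperset_card_eq hsub (le_max_right τ _)
    (max_le h (card_le_card hsub))
  refine ⟨U ∪ C, subset_union_left, union_subset hUF ((hCF.trans (filter_subset _ _))), ?_, ?_⟩
  · have hinter : #{S ∈ U | m ∉ S} ≤ #(U ∩ C) :=
      card_le_card (subset_inter (filter_subset _ _) hUC)
    have := card_union_add_card_inter U C
    omega
  · have : C ⊆ {S ∈ U ∪ C | m ∉ S} := fun S hS =>
      mem_filter.2 ⟨mem_union_right U hS, (mem_filter.1 (hCF hS)).2⟩
    have := card_le_card this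
    omega

lemma exists_superset_forall_le_card_avoiders {P₀ : Finset (Set α)} (hP₀ : P₀ ⊆ F)
    (h : ∀ m ∈ M, τ ≤ #{S ∈ F | m ∉ S}) :
    ∃ U, P₀ ⊆ U ∧ U ⊆ F ∧ #U ≤ #P₀ + ∑ m ∈ M, (τ - #{S ∈ P₀ | m ∉ S}) ∧
      ∀ m ∈ M, τ ≤ #{S ∈ U | m ∉ S} := by
  induction M using Finset.induction_on with
  | empty => exact ⟨P₀, subset_rfl, hP₀, by simp, by simp⟩
  | insert a M ha ih =>
    obtain ⟨U, hP₀U, hUF, hUcard, hU⟩ := ih fun m hm => h m (mem_insert_of_mem hm)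
    obtain ⟨U', hUU', hU'F, hU'card, hU'a⟩ :=
      exists_superset_le_card_avoiders hUF (h a (mem_insert_self a M))
    have hmono : #{S ∈ P₀ | a ∉ S} ≤ #{S ∈ U | a ∉ S} := card_le_card (filter_subset_filter _ hP₀U)
    refine ⟨U', hP₀U.trans hUU', hU'F, ?_, ?_⟩
    · rw [sum_insert ha]
      omega
    · simp only [forall_mem_insert]
      exact ⟨hU'a, fun m hm => (hU m hm).trans (card_le_card (filter_subset_filter _ hUU'))⟩

lemma sum_sub_card_avoiders_add_le {P₀ : Finset (Set α)} (h2 : ∀ S ∈ P₀, 2 ≤ #{x ∈ M | x ∉ S}) :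
    ∑ m ∈ M, (#P₀ - #{S ∈ P₀ | m ∉ S}) + 2 * #P₀ ≤ #M * #P₀ := by
  have hsplit : ∑ m ∈ M, (#P₀ - #{S ∈ P₀ | m ∉ S}) + ∑ m ∈ M, #{S ∈ P₀ | m ∉ S} = #M * #P₀ := by
    rw [← sum_add_distrib, ← smul_eq_mul, ← sum_const]
    exact sum_congr rfl fun m _ => Nat.sub_add_cancel (card_filter_le _ _)
  have hcount : 2 * #P₀ ≤ ∑ m ∈ M, #{S ∈ P₀ | m ∉ S} := by
    have := sum_card_bipartiteAbove_eq_sum_card_bipartiteBelow (s := M) (t := P₀)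
      (r := fun m S => m ∉ S)
    simp only [bipartiteAbove, bipartiteBelow] at this
    rw [this, mul_comm, ← smul_eq_mul, ← sum_const]
    exact sum_le_sum h2
  omega

lemma exists_subset_card_le_forall_le_card_avoiders {p : ℕ} (hkey : (#M - 1) * τ < p)
    (h : ∀ m ∈ M, τ ≤ #{S ∈ F | m ∉ S})
    (hinc : ∀ S ∈ F, ∀ S' ∈ F, S' ≠ S → ∃ x ∈ M, x ∈ S' ∧ x ∉ S) :
    ∃ U ⊆ F, #U ≤ p ∧ ∀ m ∈ M, τ ≤ #{S ∈ U | m ∉ S} := by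
  obtain hτ | hτ := le_or_gt τ 1
  · obtain ⟨U, -, hUF, hUcard, hU⟩ := exists_superset_forall_le_card_avoiders (empty_subset F) h
    refine ⟨U, hUF, hUcard.trans ?_, hU⟩
    simp only [filter_empty, card_empty, Nat.sub_zero, sum_const, smul_eq_mul, zero_add]
    interval_cases τ <;> omega
  obtain ⟨m₁, hm₁⟩ | hM := M.eq_empty_or_nonempty.symm
  · obtain ⟨P₀, hP₀, hP₀card⟩ := exists_subset_card_eq (h m₁ hm₁)
    have hP₀F : P₀ ⊆ F := hP₀.trans (filter_subset _ _)
    -- incomparability with another avoider of `m₁` gives each member of `P₀` a second avoided point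
    have h2 : ∀ S ∈ P₀, 2 ≤ #{x ∈ M | x ∉ S} := by
      intro S hS
      obtain ⟨S', hS', hS'S⟩ := exists_mem_ne (by have := h m₁ hm₁; omega : 1 < #{S ∈ F | m₁ ∉ S}) S
      obtain ⟨x, hxM, hxS', hxS⟩ := hinc S (hP₀F hS) S' (mem_filter.1 hS').1 hS'S
      have hxm₁ : x ≠ m₁ := by rintro rfl; exact (mem_filter.1 hS').2 hxS'
      refine le_trans ?_ (card_le_card (s := {x, m₁}) ?_)
      · rw [card_pair hxm₁]
      · simp only [insert_subset_iff, singleton_subset_iff, mem_filter]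
        exact ⟨⟨hxM, hxS⟩, hm₁, (mem_filter.1 (hP₀ hS)).2⟩
    obtain ⟨U, -, hUF, hUcard, hU⟩ := exists_superset_forall_le_card_avoiders hP₀F h
    have := sum_sub_card_avoiders_add_le h2
    rw [hP₀card] at this hUcard
    refine ⟨U, hUF, ?_, hU⟩
    have : #M * τ = (#M - 1) * τ + τ := by
      rw [← Nat.succ_mul, Nat.succ_eq_add_one, Nat.sub_add_cancel (card_pos.2 ⟨m₁, hm₁⟩)]
    omega
  · exact ⟨∅, empty_subset F, Nat.zero_le p, by simp [hM]⟩

theorem exists_stabbing_of_forall_card_avoiders_lt {p : ℕ} (hM : ∀ S ∈ F, ∃ x ∈ M, x ∈ S)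
    (hkey : (#M - 1) * τ < p) (hp : p ≤ #F)
    (hpq : ∀ G ⊆ F, #G = p → ∃ m ∈ M, #{S ∈ G | m ∉ S} < τ) :
    ∃ P ⊆ M, #P ≤ τ ∧ ∀ S ∈ F, ∃ x ∈ P, x ∈ S := by
  induction F using Finset.strongInduction with
  | H F ih =>
  by_cases hlight : ∃ m ∈ M, #{S ∈ F | m ∉ S} < τ
  · obtain ⟨m, hm, hlt⟩ := hlight
    exact exists_stabbing_of_card_avoiders_lt hM hm hlt
  push Not at hlight
  by_cases hcmp : ∃ S ∈ F, ∃ S' ∈ F, S' ≠ S ∧ ∀ x ∈ M, x ∈ S' → x ∈ S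
  · obtain ⟨S, hS, S', hS', hS'S, hsub⟩ := hcmp
    have hp' : p < #F := hp.lt_of_ne fun hpF => by
      obtain ⟨m, hm, hlt⟩ := hpq F subset_rfl hpF.symm
      exact (hlight m hm).not_gt hlt
    obtain ⟨P, hPM, hPcard, hP⟩ := ih (F.erase S) (erase_ssubset hS)
      (fun T hT => hM T (mem_of_mem_erase hT)) (by rw [card_erase_of_mem hS]; omega)
      (fun G hG => hpq G (hG.trans (erase_subset S F)))
    refine ⟨P, hPM, hPcard, fun T hT => ?_⟩
    obtain rfl | hTS := eq_or_ne T S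
    · obtain ⟨x, hxP, hxS'⟩ := hP S' (mem_erase.2 ⟨hS'S, hS'⟩)
      exact ⟨x, hxP, hsub x (hPM hxP) hxS'⟩
    · exact hP T (mem_erase.2 ⟨hTS, hT⟩)
  push Not at hcmp
  exfalso
  obtain ⟨U, hUF, hUcard, hU⟩ := exists_subset_card_le_forall_le_card_avoiders hkey hlight hcmp
  obtain ⟨G, hUG, hGF, hGcard⟩ := exists_subsuperset_card_eq hUF hUcard hp
  obtain ⟨m, hm, hlt⟩ := hpq G hGF hGcard
  exact ((hU m hm).trans (card_le_card (filter_subset_filter _ hUG))).not_gt hlt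

end Stabbing

lemma exists_isMin_le {α : Type*} [Preorder α] [WellFoundedLT α] (x : α) :
    ∃ m, IsMin m ∧ m ≤ x := by
  obtain ⟨m, hmx, hm⟩ := exists_minimal_le_of_wellFoundedLT (fun _ => True) x trivial
  exact ⟨m, minimal_true.1 hm, hmx⟩

lemma isAntichain_setOf_isMin {α : Type*} [PartialOrder α] :
    IsAntichain (· ≤ ·) {x : α | IsMin x} :=
  fun _ _ _ hb hab hle => hab (le_antisymm hle (hb hle))

lemma IsLowerSet.exists_isMin_mem {α : Type*} [Preorder α] [WellFoundedLT α] {S : Set α}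
    (hS : IsLowerSet S) (hne : S.Nonempty) : ∃ m ∈ S, IsMin m := by
  obtain ⟨x, hx⟩ := hne
  obtain ⟨m, hm, hmx⟩ := exists_isMin_le x
  exact ⟨m, hS hmx hx, hm⟩

open scoped Classical in
lemma exists_isMin_card_avoiders_add_card_le {α : Type*} [Preorder α] [WellFoundedLT α]
    {G H : Finset (Set α)} (hG : ∀ S ∈ G, IsLowerSet S) (hHG : H ⊆ G) (hH : (⋂ S ∈ H, S).Nonempty) :
    ∃ m, IsMin m ∧ #{S ∈ G | m ∉ S} + #H ≤ #G := by
  obtain ⟨x, hx⟩ := hH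
  obtain ⟨m, hm, hmx⟩ := exists_isMin_le x
  have hHm : H ⊆ {S ∈ G | m ∈ S} := fun S hS =>
    mem_filter.2 ⟨hHG hS, hG S (hHG hS) hmx (Set.mem_iInter₂.1 hx S hS)⟩
  have := card_filter_add_card_filter_not (s := G) (m ∈ ·)
  exact ⟨m, hm, by have := card_le_card hHm; omega⟩

lemma sub_one_mul_sub_add_one_lt {w p q : ℕ} (hqp : q ≤ p)
    (h : (w - 2) * p < (w - 1) * (q - 1)) :
    (w - 1) * (p - q + 1) < p := by
  have hw : 2 ≤ w := by
    by_contra!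
    interval_cases w <;> simp at h
  have hq : 1 ≤ q := by
    by_contra!
    interval_cases q
    simp at h
  zify [hw, hw.trans' one_le_two, hq, hqp] at h ⊢
  linarith

theorem stmt_18_general {E : Type*} [Fintype E] [PartialOrder E] (w p q : ℕ)
    (hwid : (∀ A : Finset E, IsAntichain (· ≤ ·) (↑A : Set E) → A.card ≤ w) ∧
      ∃ A : Finset E, IsAntichain (· ≤ ·) (↑A : Set E) ∧ A.card = w)
    (hpq : q ≤ p)
    (hadm : (w - 2) * p < (w - 1) * (q - 1))
    (F : Finset (Set E)) (hF : ∀ S ∈ F, S.Nonempty ∧ IsLowerSet S)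
    (hcard : p ≤ F.card)
    (hP : ∀ G ⊆ F, G.card = p → ∃ H ⊆ G, H.card = q ∧ (⋂ S ∈ H, S).Nonempty) :
    ∃ P : Finset E, P.card ≤ p - q + 1 ∧ ∀ S ∈ F, ∃ x ∈ P, x ∈ S := by
  classical
  set M : Finset E := {x | IsMin x}
  have hMw : #M ≤ w := hwid.1 M (by simpa [M] using isAntichain_setOf_isMin)
  have hkey : (#M - 1) * (p - q + 1) < p :=
    (Nat.mul_le_mul_right _ (Nat.sub_le_sub_right hMw 1)).trans_lt
      (sub_one_mul_sub_add_one_lt hpq hadm)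
  have hmeet : ∀ S ∈ F, ∃ x ∈ M, x ∈ S := fun S hS => by
    obtain ⟨m, hmS, hm⟩ := (hF S hS).2.exists_isMin_mem (hF S hS).1
    exact ⟨m, by simpa [M] using hm, hmS⟩
  have hlight : ∀ G ⊆ F, #G = p → ∃ m ∈ M, #{S ∈ G | m ∉ S} < p - q + 1 := fun G hGF hGp => by
    obtain ⟨H, hHG, hHq, hH⟩ := hP G hGF hGp
    obtain ⟨m, hm, hle⟩ :=
      exists_isMin_card_avoiders_add_card_le (fun S hS => (hF S (hGF hS)).2) hHG hH
    exact ⟨m, by simpa [M] using hm, by omega⟩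
  obtain ⟨P, -, hPcard, hP⟩ := exists_stabbing_of_forall_card_avoiders_lt hmeet hkey hcard hlight
  exact ⟨P, hPcard, hP⟩

theorem stmt_18 {E : Type*} [Fintype E] [PartialOrder E] (w p q : ℕ)
    (hw2 : 2 ≤ w)
    (hwid : (∀ A : Finset E, IsAntichain (· ≤ ·) (↑A : Set E) → A.card ≤ w) ∧
      ∃ A : Finset E, IsAntichain (· ≤ ·) (↑A : Set E) ∧ A.card = w)
    (hq : w ≤ q) (hpq : q ≤ p)
    (hadm : (w - 2) * p < (w - 1) * (q - 1))
    (F : Finset (Set E)) (hF : ∀ S ∈ F, S.Nonempty ∧ IsLowerSet S)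
    (hcard : p ≤ F.card)
    (hP : ∀ G ⊆ F, G.card = p → ∃ H ⊆ G, H.card = q ∧ (⋂ S ∈ H, S).Nonempty) :
    ∃ P : Finset E, P.card ≤ p - q + 1 ∧ ∀ S ∈ F, ∃ x ∈ P, x ∈ S :=
  stmt_18_general w p q hwid hpq hadm F hF hcard hP
end
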